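/- Let G = (P, X, d, ≤, ≤*, ◁) be an approximate Gowers space satisfying the pigeonhole principle, and let 𝒳 ⊆ X^ω be a strategically Ramsey set. Then for every p ∈ P and every sequence Δ = (Δ_n) of positive reals, there exists q ≤ p such that in the asymptotic game F_q, player I either has a strategy to reach the complement of 𝒳, or has a strategy to reach (𝒳)_Δ. -/

import Mathlib

open MeasureTheory Filter Topology TopologicalSpace

/-- The list `[x 0, …, x (n-1)]`. -/
def preSeq {X : Type*} (x : ℕ → X) (n : ℕ) : List X := (List.range n).map x

/-- Interleaving of two sequences: `x 0, y 0, x 1, y 1, …`. -/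
def itl {X : Type*} (x y : ℕ → X) : ℕ → X := fun k => if k % 2 = 0 then x (k / 2) else y (k / 2)

/-- Outcome produced by a strategy of player II against the moves `f` of player I. -/
def gOut {Q X : Type*} (τ : List Q → X) (f : ℕ → Q) : ℕ → X :=
  fun n => τ ((List.range (n + 1)).map f)

/-! ## Approximate Gowers spaces -/

structure ApproxGowersSpace (P : Type*) (X : Type*) where
  le : P → P → Prop
  les : P → P → Prop
  tri : X → P → Prop
  le_refl : ∀ p, le p p
  le_trans : ∀ p q r, le p q → le q r → le p r
  les_refl : ∀ p, les p p
  les_trans : ∀ p q r, les p q → les q r → les p r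
  le_imp_les : ∀ p q, le p q → les p q
  diag : ∀ p q, les p q → ∃ r, le r p ∧ le r q ∧ les p r
  decseq : ∀ f : ℕ → P, (∀ n, le (f (n + 1)) (f n)) → ∃ p, ∀ n, les p (f n)
  ext : ∀ p : P, ∃ x, tri x p
  mono : ∀ (x : X) (p q : P), tri x p → le p q → tri x q

/-- The `Δ`-expansion of a set of sequences in a metric space. -/
def expandSeq {X : Type*} [MetricSpace X] (Δ : ℕ → ℝ) (Y : Set (ℕ → X)) : Set (ℕ → X) :=
  {x | ∃ y ∈ Y, ∀ n, dist (x n) (y n) ≤ Δ n}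

namespace ApproxGowersSpace

variable {P X : Type*} (G : ApproxGowersSpace P X)

def lap (q p : P) : Prop := G.le q p ∧ G.les p q

/-- Player I has a strategy in the asymptotic game `F_p` to reach `Y`. -/
def IStratF (p : P) (Y : Set (ℕ → X)) : Prop :=
  ∃ σ : List X → P, (∀ s, G.lap (σ s) p) ∧
    ∀ x : ℕ → X, (∀ n, G.tri (x n) (σ (preSeq x n))) → x ∈ Y

/-- Player II has a strategy in Gowers' game `G_p` to reach `Y`. -/
def IIStratG (p : P) (Y : Set (ℕ → X)) : Prop :=
  ∃ τ : List P → X, ∀ f : ℕ → P, (∀ n, G.le (f n) p) →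
    (∀ n, G.tri (gOut τ f n) (f n)) ∧ gOut τ f ∈ Y

def advI (σ : P → List (X × P) → X × P) (p0 : P) (g : ℕ → X × P) (n : ℕ) : X × P :=
  σ p0 ((List.range n).map g)

def advIIps (p0 : P) (g : ℕ → X × P) : ℕ → P :=
  fun n => Nat.rec (motive := fun _ => P) p0 (fun k _ => (g k).2) n

def advIOut (σ : P → List (X × P) → X × P) (p0 : P) (g : ℕ → X × P) : ℕ → X :=
  itl (fun n => (advI σ p0 g n).1) (fun n => (g n).1)

/-- Player I has a strategy in the game `A_p` to reach `Y`. -/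
def IStratA (p : P) (Y : Set (ℕ → X)) : Prop :=
  ∃ σ : P → List (X × P) → X × P,
    (∀ p0 g n, G.tri (advI σ p0 g n).1 (advIIps p0 g n) ∧ G.lap (advI σ p0 g n).2 p) ∧
    ∀ p0 g, (∀ n, G.le (advIIps p0 g n) p) →
      (∀ n, G.tri (g n).1 ((advI σ p0 g n).2)) →
      advIOut σ p0 g ∈ Y

def advII (τ : List (X × P) → X × P) (h : ℕ → X × P) (n : ℕ) : X × P :=
  τ ((List.range (n + 1)).map h)

def advIIpsB (p0 : P) (τ : List (X × P) → X × P) (h : ℕ → X × P) : ℕ → P :=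
  fun n => Nat.rec (motive := fun _ => P) p0 (fun k _ => (advII τ h k).2) n

def advIIOut (τ : List (X × P) → X × P) (h : ℕ → X × P) : ℕ → X :=
  itl (fun n => (h n).1) (fun n => (advII τ h n).1)

/-- Player II has a strategy in the game `B_p` to reach `Y`. -/
def IIStratB (p : P) (Y : Set (ℕ → X)) : Prop :=
  ∃ (p0 : P) (τ : List (X × P) → X × P), G.lap p0 p ∧
    (∀ h n, G.tri (advII τ h n).1 ((h n).2) ∧ G.lap (advIIpsB p0 τ h (n + 1)) p) ∧
    ∀ h : ℕ → X × P,
      (∀ n, G.tri (h n).1 (advIIpsB p0 τ h n) ∧ G.le ((h n).2) p) →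
      advIIOut τ h ∈ Y

/-- The (approximate) pigeonhole principle. -/
def Pigeonhole [MetricSpace X] : Prop :=
  ∀ (p : P) (A : Set X) (δ : ℝ), 0 < δ → ∃ q, G.le q p ∧
    ((∀ x, G.tri x q → x ∉ A) ∨ ∀ x, G.tri x q → ∃ y ∈ A, dist x y ≤ δ)

/-- A set is strategically Ramsey (approximate version). -/
def StrategicallyRamsey [MetricSpace X] (Y : Set (ℕ → X)) : Prop :=
  ∀ (Δ : ℕ → ℝ), (∀ n, 0 < Δ n) → ∀ p : P, ∃ q, G.le q p ∧
    (G.IStratF q Yᶜ ∨ G.IIStratG q (expandSeq Δ Y))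

end ApproxGowersSpace

/-! ## Approximate asymptotic spaces and systems of precompact sets -/

structure ApproxAsympSpace (P : Type*) (X : Type*) where
  lap : P → P → Prop
  lap_refl : ∀ p, lap p p
  lap_trans : ∀ p q r, lap p q → lap q r → lap p r
  tri : X → P → Prop
  diag : ∀ p q r, lap q p → lap r p → ∃ u, lap u q ∧ lap u r
  ext : ∀ p : P, ∃ x, tri x p
  mono : ∀ (x : X) (p q : P), tri x p → lap p q → tri x q

namespace ApproxAsympSpace

variable {P X : Type*} (A : ApproxAsympSpace P X)

/-- `K ◁ p` for a set `K`: the points of `K` related to `p` are dense in `K`. -/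
def denseIn [MetricSpace X] (K : Set X) (p : P) : Prop :=
  K ⊆ closure {x | x ∈ K ∧ A.tri x p}

/-- Player I has a strategy in the asymptotic game `F_p` to reach `Y`. -/
def IStratF (p : P) (Y : Set (ℕ → X)) : Prop :=
  ∃ σ : List X → P, (∀ s, A.lap (σ s) p) ∧
    ∀ x : ℕ → X, (∀ n, A.tri (x n) (σ (preSeq x n))) → x ∈ Y

/-- Player I has a strategy in the strong asymptotic game `SF_p` (where II plays sets in `𝒦`)
to build a sequence satisfying `Φ`. -/
def IStratSF [MetricSpace X] (𝒦 : Set (Set X)) (p : P) (Φ : (ℕ → Set X) → Prop) : Prop :=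
  ∃ σ : List (Set X) → P, (∀ s, A.lap (σ s) p) ∧
    ∀ Ks : ℕ → Set X, (∀ n, Ks n ∈ 𝒦 ∧ A.denseIn (Ks n) (σ (preSeq Ks n))) → Φ Ks

end ApproxAsympSpace

/-- A system of precompact sets for an approximate asymptotic space. -/
structure PrecompactSystem {P X : Type*} [MetricSpace X] (A : ApproxAsympSpace P X) where
  mem : Set (Set X)
  precompact : ∀ K ∈ mem, IsCompact (closure K)
  op : Set X → Set X → Set X
  op_mem : ∀ K ∈ mem, ∀ L ∈ mem, op K L ∈ mem
  op_assoc : ∀ K ∈ mem, ∀ L ∈ mem, ∀ M ∈ mem, op (op K L) M = op K (op L M)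
  compat : ∀ (p : P), ∀ K ∈ mem, ∀ L ∈ mem,
    A.denseIn K p → A.denseIn L p → A.denseIn (op K L) p

/-- `⊕_{n ∈ A} K n`, for a finite nonempty set `A` of integers (taken in increasing order). -/
def sysSum {X : Type*} (op : Set X → Set X → Set X) (K : ℕ → Set X) (A : Finset ℕ) : Set X :=
  match A.sort (· ≤ ·) with
  | [] => ∅
  | a :: t => t.foldl (fun S n => op S (K n)) (K a)

/-- Block sequences of a sequence `(K_n)` of sets, relative to the operation `op`. -/
def IsBlockSeqOf {X : Type*} (op : Set X → Set X → Set X) (K : ℕ → Set X) (x : ℕ → X) : Prop :=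
  ∃ A : ℕ → Finset ℕ, (∀ i, (A i).Nonempty) ∧
    (∀ i, ∀ m ∈ A i, ∀ m' ∈ A (i + 1), m < m') ∧
    ∀ i, x i ∈ sysSum op K (A i)

/-- The approximate asymptotic space underlying an approximate Gowers space. -/
def ApproxGowersSpace.toAsymp {P X : Type*} (G : ApproxGowersSpace P X) :
    ApproxAsympSpace P X where
  lap := G.lap
  lap_refl := fun p => ⟨G.le_refl p, G.les_refl p⟩
  lap_trans := fun p q r h1 h2 => ⟨G.le_trans _ _ _ h1.1 h2.1, G.les_trans _ _ _ h2.2 h1.2⟩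
  tri := G.tri
  diag := fun p q r hq hr => by
    obtain ⟨u, hu1, hu2, hu3⟩ :=
      G.diag q r (G.les_trans _ _ _ (G.le_imp_les _ _ hq.1) hr.2)
    exact ⟨u, ⟨hu1, hu3⟩,
      ⟨hu2, G.les_trans _ _ _ (G.les_trans _ _ _ (G.le_imp_les _ _ hr.1) hq.2) hu3⟩⟩
  ext := G.ext
  mono := fun x p q h hpq => G.mono x p q h hpq.1

/-!
Apply strategic Ramseyness with `Δ/2`. In its second alternative II has a strategy `τ` in `G_{q₀}`
reaching `(𝒳)_{Δ/2}`, and I must reach `((𝒳)_{Δ/2})_{Δ/2} ⊆ (𝒳)_Δ` in some `F_q` with `q ≤ q₀`.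
Fix a countable dense `D ⊆ X` and attach to each finite sequence `t` in `D` a legal "shadow" run of
`G_{q₀}` against `τ` whose answers follow `t` as closely as possible. By pigeonhole, below every
condition there is one all of whose points are close to an answer of `τ` extending the shadow run
of `t`; fusing these countably many dense requirements yields `q` and conditions `m_t ⪅ q` meeting
them. After `x_0, …, x_{k-1}`, I plays `m_t` for a coordinatewise approximation `t ∈ Dᵏ` of that
history; then each `x_k` is close to the `k`-th answer of `τ` in one legal run, whose outcome lies
in `(𝒳)_{Δ/2}`.
-/

theorem preSeq_succ {α : Type*} (x : ℕ → α) (k : ℕ) : preSeq x (k + 1) = preSeq x k ++ [x k] := by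
  simp [preSeq, List.range_succ]

@[simp]
theorem length_preSeq {α : Type*} (x : ℕ → α) (k : ℕ) : (preSeq x k).length = k := by
  simp [preSeq]

theorem gOut_eq_preSeq {Q α : Type*} (τ : List Q → α) (f : ℕ → Q) (n : ℕ) :
    gOut τ f n = τ (preSeq f (n + 1)) :=
  rfl

theorem map_preSeq {α β : Type*} (f : α → β) (x : ℕ → α) (k : ℕ) :
    (preSeq x k).map f = preSeq (fun i => f (x i)) k := by
  simp [preSeq]

theorem preSeq_mapIdx {α β : Type*} (f : ℕ → α → β) (x : ℕ → α) (k : ℕ) :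
    (preSeq x k).mapIdx f = preSeq (fun i => f i (x i)) k := by
  apply List.ext_getElem <;> simp [preSeq]

theorem expandSeq_expandSeq_subset {X : Type*} [MetricSpace X] (Δ Δ' : ℕ → ℝ)
    (Y : Set (ℕ → X)) : expandSeq Δ (expandSeq Δ' Y) ⊆ expandSeq (Δ + Δ') Y := by
  rintro x ⟨y, ⟨z, hz, hyz⟩, hxy⟩
  exact ⟨z, hz, fun n => (dist_triangle _ _ _).trans (add_le_add (hxy n) (hyz n))⟩

namespace ApproxGowersSpace

variable {P X : Type*} (G : ApproxGowersSpace P X)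

theorem IStratF.mono {G : ApproxGowersSpace P X} {q : P} {Y Z : Set (ℕ → X)}
    (h : G.IStratF q Y) (hYZ : Y ⊆ Z) : G.IStratF q Z :=
  let ⟨σ, hσ, hσY⟩ := h
  ⟨σ, hσ, fun x hx => hYZ (hσY x hx)⟩

theorem exists_le_forall_lap_le_of_dense_nat {q₀ : P} (D : ℕ → P → Prop)
    (hD : ∀ n v, G.le v q₀ → ∃ u, G.le u v ∧ D n u) :
    ∃ Q, G.le Q q₀ ∧ ∀ n, ∃ m, G.lap m Q ∧ ∃ u, D n u ∧ G.le m u := by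
  choose next hnext_le hnext_D using hD
  let v : ℕ → {v // G.le v q₀} := fun n => Nat.rec
    ⟨next 0 q₀ (G.le_refl q₀), hnext_le _ _ _⟩
    (fun n w => ⟨next (n + 1) w w.2, G.le_trans _ _ _ (hnext_le _ _ _) w.2⟩) n
  have hv_succ : ∀ n, G.le (v (n + 1)).1 (v n).1 := fun n => hnext_le (n + 1) (v n).1 (v n).2
  have hv_D : ∀ n, D n (v n).1
    | 0 => hnext_D 0 q₀ (G.le_refl q₀)
    | n + 1 => hnext_D (n + 1) (v n).1 (v n).2
  -- `Q ≤ qs ≤* v n`, so `diag` yields for each `n` some `m ⪅ Q` below `v n`.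
  obtain ⟨qs, hqs⟩ := G.decseq (fun n => (v n).1) hv_succ
  obtain ⟨Q, hQqs, hQv, -⟩ := G.diag qs (v 0).1 (hqs 0)
  refine ⟨Q, G.le_trans _ _ _ hQv (v 0).2, fun n => ?_⟩
  obtain ⟨m, hmQ, hmv, hQm⟩ :=
    G.diag Q (v n).1 (G.les_trans _ _ _ (G.le_imp_les _ _ hQqs) (hqs n))
  exact ⟨m, ⟨hmQ, hQm⟩, (v n).1, hv_D n, hmv⟩

theorem exists_le_forall_lap_le_of_dense {ι : Type*} [Countable ι] {q₀ : P} (D : ι → P → Prop)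
    (hD : ∀ i v, G.le v q₀ → ∃ u, G.le u v ∧ D i u) :
    ∃ Q, G.le Q q₀ ∧ ∀ i, ∃ m, G.lap m Q ∧ ∃ u, D i u ∧ G.le m u := by
  cases isEmpty_or_nonempty ι with
  | inl _ => exact ⟨q₀, G.le_refl q₀, isEmptyElim⟩
  | inr _ =>
    obtain ⟨e, he⟩ := exists_surjective_nat ι
    obtain ⟨Q, hQ, hm⟩ :=
      G.exists_le_forall_lap_le_of_dense_nat (fun n => D (e n)) (fun n => hD (e n))
    exact ⟨Q, hQ, fun i => (he i).elim fun n hn => hn ▸ hm n⟩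

theorem tri_answer {q₀ : P} {τ : List P → X}
    (hτ : ∀ f : ℕ → P, (∀ n, G.le (f n) q₀) → ∀ n, G.tri (gOut τ f n) (f n))
    {L : List P} (hL : ∀ r ∈ L, G.le r q₀) {r : P} (hr : G.le r q₀) :
    G.tri (τ (L ++ [r])) r := by
  let f : ℕ → P := fun n => if h : n < L.length then L[n] else r
  have hf : ∀ n, G.le (f n) q₀ := fun n => by
    unfold f; split
    · exact hL _ (List.getElem_mem _)
    · exact hr
  have hrun : (List.range (L.length + 1)).map f = L ++ [r] := by
    apply List.ext_getElem <;> simp [f, List.getElem_append]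
  simpa [gOut, hrun, f] using hτ f hf L.length

variable [MetricSpace X]

theorem exists_le_forall_tri_near_answer (hPH : G.Pigeonhole) {q₀ : P} {τ : List P → X}
    (hτ : ∀ f : ℕ → P, (∀ n, G.le (f n) q₀) → ∀ n, G.tri (gOut τ f n) (f n))
    {L : List P} (hL : ∀ r ∈ L, G.le r q₀) {v : P} (hv : G.le v q₀) {δ : ℝ} (hδ : 0 < δ) :
    ∃ u, G.le u v ∧ ∀ x, G.tri x u → ∃ r, G.le r q₀ ∧ dist x (τ (L ++ [r])) ≤ δ := by
  obtain ⟨u, huv, hu | hu⟩ := hPH v {x | ∃ r, G.le r q₀ ∧ τ (L ++ [r]) = x} δ hδ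
  · have huq₀ := G.le_trans _ _ _ huv hv
    exact (hu _ (G.tri_answer hτ hL huq₀) ⟨u, huq₀, rfl⟩).elim
  · refine ⟨u, huv, fun x hx => ?_⟩
    obtain ⟨_, ⟨r, hr, rfl⟩, hxr⟩ := hu x hx
    exact ⟨r, hr, hxr⟩

section ShadowRun

variable (τ : List P → X) (q₀ : P) (δ : ℕ → ℝ)

open Classical in
noncomputable def shadowMove (L : List P) (d : X) : P :=
  if h : ∃ r, G.le r q₀ ∧ dist (τ (L ++ [r])) d ≤ δ L.length then h.choose else q₀

/-- The run of `G_{q₀}` against `τ` in which I, at stage `k`, plays a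
condition making `τ` answer `δ k`-close to `t_k` whenever there is one. -/
noncomputable def shadowRun (t : List X) : List P :=
  t.foldl (fun L d => L ++ [G.shadowMove τ q₀ δ L d]) []

theorem shadowMove_le (L : List P) (d : X) : G.le (G.shadowMove τ q₀ δ L d) q₀ := by
  unfold shadowMove
  split
  next h => exact h.choose_spec.1
  next => exact G.le_refl q₀

theorem dist_shadowMove_le {L : List P} {d : X}
    (h : ∃ r, G.le r q₀ ∧ dist (τ (L ++ [r])) d ≤ δ L.length) :
    dist (τ (L ++ [G.shadowMove τ q₀ δ L d])) d ≤ δ L.length := by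
  unfold shadowMove
  rw [dif_pos h]
  exact h.choose_spec.2

theorem shadowRun_concat (t : List X) (d : X) :
    G.shadowRun τ q₀ δ (t ++ [d]) =
      G.shadowRun τ q₀ δ t ++ [G.shadowMove τ q₀ δ (G.shadowRun τ q₀ δ t) d] := by
  simp [shadowRun]

theorem le_of_mem_shadowRun (t : List X) : ∀ r ∈ G.shadowRun τ q₀ δ t, G.le r q₀ := by
  induction t using List.reverseRecOn with
  | nil => simp [shadowRun]
  | append_singleton t d ih =>
    simp only [shadowRun_concat, List.mem_append, List.mem_singleton]
    rintro r (hr | rfl)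
    exacts [ih r hr, G.shadowMove_le τ q₀ δ _ _]

theorem shadowRun_preSeq (d : ℕ → X) (k : ℕ) :
    G.shadowRun τ q₀ δ (preSeq d k) =
      preSeq (fun i => G.shadowMove τ q₀ δ (G.shadowRun τ q₀ δ (preSeq d i)) (d i)) k := by
  induction k with
  | zero => rfl
  | succ k ih => rw [preSeq_succ, shadowRun_concat, preSeq_succ, ih]

end ShadowRun

theorem mem_expandSeq_of_near_shadowRun {q₀ : P} {τ : List P → X} {Y : Set (ℕ → X)}
    (hτ : ∀ f : ℕ → P, (∀ n, G.le (f n) q₀) → gOut τ f ∈ Y) {ε : ℕ → ℝ} {x d : ℕ → X}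
    (hxd : ∀ k, dist (x k) (d k) ≤ ε k)
    (hx : ∀ k, ∃ r, G.le r q₀ ∧
      dist (x k) (τ (G.shadowRun τ q₀ (2 * ε) (preSeq d k) ++ [r])) ≤ ε k) :
    x ∈ expandSeq (3 * ε) Y := by
  set g : ℕ → P := fun i =>
    G.shadowMove τ q₀ (2 * ε) (G.shadowRun τ q₀ (2 * ε) (preSeq d i)) (d i)
  refine ⟨gOut τ g, hτ g fun i => G.shadowMove_le _ _ _ _ _, fun k => ?_⟩
  have hrun : G.shadowRun τ q₀ (2 * ε) (preSeq d k) = preSeq g k :=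
    G.shadowRun_preSeq τ q₀ _ d k
  have hgk : g k = G.shadowMove τ q₀ (2 * ε) (preSeq g k) (d k) := by
    simp only [g, hrun]
  obtain ⟨r, hr, hxr⟩ := hx k
  have hmove : dist (gOut τ g k) (d k) ≤ 2 * ε k := by
    have hnear : ∃ r, G.le r q₀ ∧
        dist (τ (preSeq g k ++ [r])) (d k) ≤ (2 * ε) (preSeq g k).length := by
      refine ⟨r, hr, ?_⟩
      rw [length_preSeq, ← hrun]
      calc _ ≤ dist (x k) (τ (G.shadowRun τ q₀ (2 * ε) (preSeq d k) ++ [r])) + dist (x k) (d k) :=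
            dist_triangle_left _ _ _
        _ ≤ ε k + ε k := add_le_add hxr (hxd k)
        _ = (2 * ε) k := by simp only [Pi.mul_apply, Pi.ofNat_apply]; ring
    rw [gOut_eq_preSeq, preSeq_succ, hgk]
    simpa using G.dist_shadowMove_le τ q₀ (2 * ε) hnear
  calc dist (x k) (gOut τ g k) ≤ dist (x k) (d k) + dist (gOut τ g k) (d k) :=
        dist_triangle_right _ _ _
    _ ≤ ε k + 2 * ε k := add_le_add (hxd k) hmove
    _ = (3 * ε) k := by simp only [Pi.mul_apply, Pi.ofNat_apply]; ring

theorem exists_le_IStratF_expandSeq_of_IIStratG [SeparableSpace X] (hPH : G.Pigeonhole)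
    {Y : Set (ℕ → X)} {Δ : ℕ → ℝ} (hΔ : ∀ n, 0 < Δ n) {q₀ : P} (h : G.IIStratG q₀ Y) :
    ∃ q, G.le q q₀ ∧ G.IStratF q (expandSeq Δ Y) := by
  obtain ⟨τ, hτ⟩ := h
  set ε : ℕ → ℝ := fun k => Δ k / 3
  have hε : ∀ k, 0 < ε k := fun k => div_pos (hΔ k) three_pos
  obtain ⟨s, hs, hs_dense⟩ := exists_countable_dense X
  have : Countable s := hs.to_subtype
  have hc : ∀ k (x : X), ∃ c : s, dist x c ≤ ε k := fun k x => by
    obtain ⟨c, hc, hxc⟩ := Metric.mem_closure_iff.1 (hs_dense x) _ (hε k)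
    exact ⟨⟨c, hc⟩, hxc.le⟩
  choose c hc using hc
  let Near (t : List s) (u : P) : Prop := ∀ x, G.tri x u → ∃ r, G.le r q₀ ∧
    dist x (τ (G.shadowRun τ q₀ (2 * ε) (t.map (↑)) ++ [r])) ≤ ε t.length
  obtain ⟨Q, hQ, hQnear⟩ := G.exists_le_forall_lap_le_of_dense Near fun t v hv =>
    G.exists_le_forall_tri_near_answer hPH (fun f hf => (hτ f hf).1)
      (G.le_of_mem_shadowRun τ q₀ _ _) hv (hε _)
  choose m hmQ u hu hmu using hQnear
  refine ⟨Q, hQ, fun xs => m (xs.mapIdx c), fun xs => hmQ _, fun x hx => ?_⟩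
  have hΔε : Δ = 3 * ε := funext fun k => by simp only [ε, Pi.mul_apply, Pi.ofNat_apply]; ring
  rw [hΔε]
  refine G.mem_expandSeq_of_near_shadowRun (fun f hf => (hτ f hf).2) (d := fun k => c k (x k))
    (fun k => hc k (x k)) fun k => ?_
  have hnear := hu _ (x k) (G.mono _ _ _ (hx k) (hmu _))
  rwa [preSeq_mapIdx, map_preSeq, length_preSeq] at hnear

end ApproxGowersSpace

theorem stmt16_general {P X : Type} [MetricSpace X] [PolishSpace X]
    (G : ApproxGowersSpace P X) (hPH : G.Pigeonhole)
    (𝒳 : Set (ℕ → X)) (hSR : G.StrategicallyRamsey 𝒳)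
    (p : P) (Δ : ℕ → ℝ) (hΔ : ∀ n, 0 < Δ n) :
    ∃ q, G.le q p ∧ (G.IStratF q 𝒳ᶜ ∨ G.IStratF q (expandSeq Δ 𝒳)) := by
  have hΔ2 : ∀ n, 0 < Δ n / 2 := fun n => half_pos (hΔ n)
  obtain ⟨q₀, hq₀p, hI | hII⟩ := hSR (fun n => Δ n / 2) hΔ2 p
  · exact ⟨q₀, hq₀p, Or.inl hI⟩
  obtain ⟨q, hqq₀, hq⟩ := G.exists_le_IStratF_expandSeq_of_IIStratG hPH hΔ2 hII
  have hexpand := expandSeq_expandSeq_subset (fun n => Δ n / 2) (fun n => Δ n / 2) 𝒳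
  rw [show (fun n => Δ n / 2) + (fun n => Δ n / 2) = Δ from funext fun n => add_halves (Δ n)]
    at hexpand
  exact ⟨q, G.le_trans _ _ _ hqq₀ hq₀p, Or.inr (hq.mono hexpand)⟩

theorem stmt16 {P X : Type} [Nonempty P] [MetricSpace X] [Nonempty X] [PolishSpace X]
    (G : ApproxGowersSpace P X) (hPH : G.Pigeonhole)
    (𝒳 : Set (ℕ → X)) (hSR : G.StrategicallyRamsey 𝒳)
    (p : P) (Δ : ℕ → ℝ) (hΔ : ∀ n, 0 < Δ n) :
    ∃ q, G.le q p ∧ (G.IStratF q 𝒳ᶜ ∨ G.IStratF q (expandSeq Δ 𝒳)) :=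
  stmt16_general G hPH 𝒳 hSR p Δ hΔ
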